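/- arXiv:2504.02258 — 5 statements merged into one kernel-verified Lean document; each statement's English description precedes it below -/
import Mathlib

section
/- For all integers m,n ≥ 1 and any constant c > (m! n!)/(m^m n^n), every matrix Y ∈ ℝ^{m×n} is multiplicatively c-Dirichlet improvable: there exists T_c > 1 such that for every T ≥ T_c there exist p ∈ ℤ^m and q ∈ ℤ^n \ {0} with ∏_{i=1}^m |Y_i q − p_i| < c/T and ∏_{j=1}^n max{1, |q_j|} < T. -/
/-!
Minkowski's convex body theorem, applied to the unimodular image
`{(x, y) : ∑ᵢ |Yᵢ y - xᵢ| < m (c/T)^(1/m), ∑ⱼ |yⱼ| < n T^(1/n)}` of a product of two `ℓ¹`-balls,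
whose volume `2^(m+n) m^m n^n c / (m! n!)` exceeds `2^(m+n)`, yields an integer point `(p, q) ≠ 0`.
By AM–GM the two `ℓ¹` bounds become `∏ |Yᵢ q - pᵢ| < c/T` and, when no `qⱼ` vanishes,
`∏ |qⱼ| < T`. For `T ≥ c m^m` the first radius is at most `1`, which forces `q ≠ 0`; if some `qⱼ`
vanishes, the at most `n - 1` remaining factors of `∏ max 1 |qⱼ|` are each below `n T^(1/n)`,
and `T > n^(n(n-1))` makes their product smaller than `T`.
-/

open MeasureTheory Finset Fintype Matrix

section

variable {ι : Type*} [Fintype ι]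

theorem exists_intCast_ne_zero_mem_of_two_pow_card_lt_volume {s : Set (ι → ℝ)}
    (h_symm : ∀ x ∈ s, -x ∈ s) (h_conv : Convex ℝ s) (h : 2 ^ card ι < volume s) :
    ∃ z : ι → ℤ, z ≠ 0 ∧ (fun i ↦ (z i : ℝ)) ∈ s := by
  let L := Submodule.span ℤ (Set.range (Pi.basisFun ℝ ι))
  have : Countable L.toAddSubgroup := inferInstanceAs (Countable L)
  have h_cube : volume (ZSpan.fundamentalDomain (Pi.basisFun ℝ ι)) = 1 := by
    simp [ZSpan.fundamentalDomain_pi_basisFun, volume_pi_pi, Real.volume_Ico]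
  obtain ⟨⟨x, hx⟩, hx0, hxs⟩ := exists_ne_zero_mem_lattice_of_measure_mul_two_pow_lt_measure
    (ZSpan.isAddFundamentalDomain' (Pi.basisFun ℝ ι) volume) h_symm h_conv (by simpa [h_cube])
  choose z hz using ((Pi.basisFun ℝ ι).mem_span_iff_repr_mem ℤ x).mp hx
  have hxz : (fun i ↦ (z i : ℝ)) = x := funext fun i ↦ by simpa using hz i
  refine ⟨z, fun hz0 ↦ hx0 ?_, hxz ▸ hxs⟩
  ext i
  simp [← hxz, hz0]

theorem convex_setOf_sum_abs_lt (r : ℝ) : Convex ℝ {x : ι → ℝ | ∑ i, |x i| < r} := by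
  intro x hx y hy a b ha hb hab
  calc ∑ i, |a * x i + b * y i| ≤ ∑ i, (a * |x i| + b * |y i|) :=
        sum_le_sum fun i _ ↦ (abs_add_le _ _).trans_eq <| by
          rw [abs_mul, abs_mul, abs_of_nonneg ha, abs_of_nonneg hb]
    _ = a * ∑ i, |x i| + b * ∑ i, |y i| := by rw [sum_add_distrib, mul_sum, mul_sum]
    _ < r := convex_Iio r hx hy ha hb hab

theorem volume_setOf_sum_abs_lt [Nonempty ι] {r : ℝ} (hr : 0 ≤ r) :
    volume {x : ι → ℝ | ∑ i, |x i| < r} =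
      ENNReal.ofReal ((2 * r) ^ card ι / (card ι).factorial) := by
  have h := volume_sum_rpow_lt ι le_rfl r
  simp only [Real.rpow_one, div_one, one_add_one_eq_two, Real.Gamma_two, mul_one,
    Real.Gamma_nat_eq_factorial] at h
  rw [h, ← ENNReal.ofReal_pow hr, ← ENNReal.ofReal_mul (by positivity)]
  congr 1
  ring

theorem prod_lt_pow_of_sum_lt_card_mul {z : ι → ℝ} {u : ℝ} (hz : ∀ i, 0 ≤ z i)
    (h : ∑ i, z i < card ι * u) : ∏ i, z i < u ^ card ι := by
  have h_sum_nonneg : 0 ≤ ∑ i, z i := sum_nonneg fun i _ ↦ hz i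
  have hι : (0 : ℝ) < card ι := by
    refine (Nat.cast_nonneg _).lt_of_ne fun hι ↦ ?_
    rw [← hι, zero_mul] at h
    linarith
  have hu : 0 ≤ u := (pos_of_mul_pos_right (h_sum_nonneg.trans_lt h) hι.le).le
  have h_amgm := Real.geom_mean_le_arith_mean univ (fun _ ↦ 1) z (fun _ _ ↦ zero_le_one)
    (by simpa using hι) (fun i _ ↦ hz i)
  simp only [Real.rpow_one, sum_const, card_univ, nsmul_eq_mul, mul_one, one_mul] at h_amgm
  rw [← Real.rpow_natCast, ← Real.rpow_inv_lt_iff_of_pos (prod_nonneg fun i _ ↦ hz i) hu hι]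
  exact h_amgm.trans_lt ((div_lt_iff₀' hι).mpr h)

end

theorem prod_max_one_abs_lt_pow {κ : Type*} [Fintype κ] (q : κ → ℤ) {u : ℝ}
    (hu : (card κ : ℝ) ^ (card κ - 1) < u) (hq : ∑ j, |(q j : ℝ)| < card κ * u) :
    ∏ j, max 1 |(q j : ℝ)| < u ^ card κ := by
  by_cases h_ne : ∀ j, q j ≠ 0
  · have h_abs (j : κ) : max 1 |(q j : ℝ)| = |(q j : ℝ)| :=
      max_eq_right (by exact_mod_cast Int.one_le_abs (h_ne j))
    simpa only [h_abs] using prod_lt_pow_of_sum_lt_card_mul (fun _ ↦ abs_nonneg _) hq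
  classical
  obtain ⟨j₀, hj₀⟩ := not_forall_not.mp h_ne
  have hn : (1 : ℝ) ≤ card κ := by exact_mod_cast card_pos_iff.mpr ⟨j₀⟩
  have hu₁ : 1 < u := (one_le_pow₀ hn).trans_lt hu
  have h_factor (j : κ) : max 1 |(q j : ℝ)| ≤ card κ * u :=
    max_le (by nlinarith) ((single_le_sum (fun j _ ↦ abs_nonneg _) (mem_univ j)).trans hq.le)
  calc ∏ j, max 1 |(q j : ℝ)| = ∏ j ∈ univ.erase j₀, max 1 |(q j : ℝ)| := by
        rw [← mul_prod_erase _ _ (mem_univ j₀), hj₀]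
        simp
    _ ≤ (card κ * u) ^ (card κ - 1) := by
        rw [← card_univ, ← card_erase_of_mem (mem_univ j₀), ← prod_const]
        exact prod_le_prod (fun j _ ↦ zero_le_one.trans (le_max_left _ _)) fun j _ ↦ h_factor j
    _ < u * u ^ (card κ - 1) := by
        rw [mul_pow]
        exact mul_lt_mul_of_pos_right hu (by positivity)
    _ = u ^ card κ := by
        rw [← pow_succ', Nat.sub_add_cancel (card_pos_iff.mpr ⟨j₀⟩)]

section

variable {ι κ : Type*} [Fintype ι] [Fintype κ]

/-- Pairs `(x, y) ∈ ℝ^ι × ℝ^κ` are encoded as `v : ι ⊕ κ → ℝ`, so that the integer pairs are the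
points of the standard lattice `ℤ^(ι ⊕ κ)`. -/
def linearFormsBody (Y : Matrix ι κ ℝ) (a b : ℝ) : Set (ι ⊕ κ → ℝ) :=
  {v | ∑ i, |(Y *ᵥ (v ∘ Sum.inr)) i - v (Sum.inl i)| < a ∧ ∑ j, |v (Sum.inr j)| < b}

theorem neg_mem_linearFormsBody {Y : Matrix ι κ ℝ} {a b : ℝ} {v : ι ⊕ κ → ℝ}
    (hv : v ∈ linearFormsBody Y a b) : -v ∈ linearFormsBody Y a b := by
  simpa [linearFormsBody, Pi.neg_comp, mulVec_neg, neg_add_eq_sub, abs_sub_comm] using hv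

section

variable [DecidableEq ι] [DecidableEq κ]

def linearFormsShear (Y : Matrix ι κ ℝ) : (ι ⊕ κ → ℝ) →ₗ[ℝ] (ι ⊕ κ → ℝ) :=
  Matrix.toLin' (Matrix.fromBlocks (-1) Y 0 1)

theorem linearFormsShear_apply (Y : Matrix ι κ ℝ) (v : ι ⊕ κ → ℝ) :
    linearFormsShear Y v = Sum.elim (Y *ᵥ (v ∘ Sum.inr) - v ∘ Sum.inl) (v ∘ Sum.inr) := by
  simp [linearFormsShear, fromBlocks_mulVec, neg_mulVec, sub_eq_neg_add]

theorem det_linearFormsShear (Y : Matrix ι κ ℝ) :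
    LinearMap.det (linearFormsShear Y) = (-1) ^ card ι := by
  rw [linearFormsShear, LinearMap.det_toLin', Matrix.det_fromBlocks_zero₂₁, Matrix.det_one,
    mul_one, Matrix.det_neg, Matrix.det_one, mul_one]

theorem volume_preimage_linearFormsShear (Y : Matrix ι κ ℝ) (s : Set (ι ⊕ κ → ℝ)) :
    volume (linearFormsShear Y ⁻¹' s) = volume s := by
  rw [Measure.addHaar_preimage_linearMap _ (by simp [det_linearFormsShear]), det_linearFormsShear]
  simp

theorem linearFormsBody_eq_preimage (Y : Matrix ι κ ℝ) (a b : ℝ) :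
    linearFormsBody Y a b = linearFormsShear Y ⁻¹' (Equiv.sumPiEquivProdPi fun _ ↦ ℝ) ⁻¹'
      ({x | ∑ i, |x i| < a} ×ˢ {y | ∑ j, |y j| < b}) := by
  ext v
  simp [linearFormsBody, linearFormsShear_apply]

end

theorem convex_linearFormsBody (Y : Matrix ι κ ℝ) (a b : ℝ) :
    Convex ℝ (linearFormsBody Y a b) := by
  classical
  rw [linearFormsBody_eq_preimage]
  exact (((convex_setOf_sum_abs_lt a).prod (convex_setOf_sum_abs_lt b)).linear_preimage
    (LinearEquiv.sumPiEquivProdPi ℝ ι κ fun _ ↦ ℝ).toLinearMap).linear_preimage _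

theorem volume_linearFormsBody [Nonempty ι] [Nonempty κ] (Y : Matrix ι κ ℝ) {a b : ℝ}
    (ha : 0 ≤ a) (hb : 0 ≤ b) :
    volume (linearFormsBody Y a b) = ENNReal.ofReal
      ((2 * a) ^ card ι / (card ι).factorial * ((2 * b) ^ card κ / (card κ).factorial)) := by
  classical
  have h_meas : MeasurableSet ({x : ι → ℝ | ∑ i, |x i| < a} ×ˢ {y : κ → ℝ | ∑ j, |y j| < b}) :=
    (measurableSet_lt (by fun_prop) measurable_const).prod
      (measurableSet_lt (by fun_prop) measurable_const)
  rw [linearFormsBody_eq_preimage, volume_preimage_linearFormsShear,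
    ← MeasurableEquiv.coe_sumPiEquivProdPi,
    (volume_measurePreserving_sumPiEquivProdPi _).measure_preimage h_meas.nullMeasurableSet,
    Measure.volume_eq_prod, Measure.prod_prod, volume_setOf_sum_abs_lt ha,
    volume_setOf_sum_abs_lt hb, ENNReal.ofReal_mul (by positivity)]

theorem exists_int_sum_abs_mulVec_sub_lt [Nonempty ι] [Nonempty κ] (Y : Matrix ι κ ℝ) {a b : ℝ}
    (ha : 0 ≤ a) (ha₁ : a ≤ 1) (hb : 0 ≤ b)
    (h : ((card ι).factorial * (card κ).factorial : ℝ) < a ^ card ι * b ^ card κ) :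
    ∃ (p : ι → ℤ) (q : κ → ℤ), q ≠ 0 ∧
      ∑ i, |(Y *ᵥ fun j ↦ (q j : ℝ)) i - p i| < a ∧ ∑ j, |(q j : ℝ)| < b := by
  have h_vol : 2 ^ card (ι ⊕ κ) < volume (linearFormsBody Y a b) := by
    rw [volume_linearFormsBody Y ha hb, card_sum, ← ENNReal.ofReal_ofNat,
      ← ENNReal.ofReal_pow zero_le_two, ENNReal.ofReal_lt_ofReal_iff_of_nonneg (by positivity),
      div_mul_div_comm, lt_div_iff₀ (by positivity)]
    calc (2 : ℝ) ^ (card ι + card κ) * ((card ι).factorial * (card κ).factorial)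
        < 2 ^ (card ι + card κ) * (a ^ card ι * b ^ card κ) := by gcongr
      _ = (2 * a) ^ card ι * (2 * b) ^ card κ := by ring
  obtain ⟨z, hz0, hzp, hzq⟩ := exists_intCast_ne_zero_mem_of_two_pow_card_lt_volume
    (fun _ ↦ neg_mem_linearFormsBody) (convex_linearFormsBody Y a b) h_vol
  refine ⟨z ∘ Sum.inl, z ∘ Sum.inr, fun hq ↦ hz0 ?_, hzp, hzq⟩
  have hp : ∀ i, z (Sum.inl i) = 0 := by
    intro i
    have h_sum : ∑ i, |(z (Sum.inl i) : ℝ)| < 1 := by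
      have hq' : (fun k ↦ (z k : ℝ)) ∘ Sum.inr = 0 := by ext j; simpa using congrFun hq j
      simpa [hq'] using hzp.trans_le ha₁
    have := (single_le_sum (fun i _ ↦ abs_nonneg _) (mem_univ i)).trans_lt h_sum
    exact_mod_cast Int.abs_lt_one_iff.mp (by exact_mod_cast this)
  ext (i | j)
  · exact hp i
  · exact congrFun hq j

theorem exists_multiplicative_dirichlet_approximation [Nonempty ι] [Nonempty κ]
    (Y : Matrix ι κ ℝ) {c T : ℝ}
    (hc : ((card ι).factorial * (card κ).factorial : ℝ) < card ι ^ card ι * card κ ^ card κ * c)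
    (hTι : c * card ι ^ card ι ≤ T) (hTκ : (card κ : ℝ) ^ (card κ * (card κ - 1)) < T) :
    ∃ (p : ι → ℤ) (q : κ → ℤ), q ≠ 0 ∧
      ∏ i, |(Y *ᵥ fun j ↦ (q j : ℝ)) i - p i| < c / T ∧ ∏ j, max 1 |(q j : ℝ)| < T := by
  have hT : 0 < T := (by positivity : (0 : ℝ) ≤ _).trans_lt hTκ
  have hc₀ : 0 < c := pos_of_mul_pos_right ((by positivity : (0 : ℝ) < _).trans hc) (by positivity)
  set v := (c / T) ^ ((card ι : ℝ)⁻¹)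
  set u := T ^ ((card κ : ℝ)⁻¹)
  have hv : v ^ card ι = c / T :=
    Real.rpow_inv_natCast_pow (by positivity) (card_ne_zero (α := ι))
  have hu : u ^ card κ = T := Real.rpow_inv_natCast_pow hT.le (card_ne_zero (α := κ))
  have hv₁ : card ι * v ≤ 1 := by
    refine (pow_le_one_iff_of_nonneg (by positivity) (card_ne_zero (α := ι))).mp ?_
    rwa [mul_pow, hv, mul_div_assoc', div_le_one hT, mul_comm]
  have hu₁ : (card κ : ℝ) ^ (card κ - 1) < u := by
    rwa [← pow_lt_pow_iff_left₀ (by positivity) (by positivity) (card_ne_zero (α := κ)),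
      ← pow_mul', hu]
  have h_vol : ((card ι).factorial * (card κ).factorial : ℝ) <
      (card ι * v) ^ card ι * (card κ * u) ^ card κ := by
    rw [mul_pow, mul_pow, hv, hu]
    calc _ < card ι ^ card ι * card κ ^ card κ * c := hc
      _ = _ := by field_simp
  obtain ⟨p, q, hq, hp_sum, hq_sum⟩ :=
    exists_int_sum_abs_mulVec_sub_lt Y (by positivity) hv₁ (by positivity) h_vol
  exact ⟨p, q, hq, hv ▸ prod_lt_pow_of_sum_lt_card_mul (fun _ ↦ abs_nonneg _) hp_sum,
    hu ▸ prod_max_one_abs_lt_pow q hu₁ hq_sum⟩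

end

/-- Proposition: for `c > m! n! / (m^m n^n)` every real `m × n` matrix `Y` is
multiplicatively `c`-Dirichlet improvable. -/
theorem multiplicative_dirichlet_improvable
    (m n : ℕ) (hm : 1 ≤ m) (hn : 1 ≤ n) (Y : Fin m → Fin n → ℝ) (c : ℝ)
    (hc : ((m.factorial : ℝ) * (n.factorial : ℝ)) / ((m : ℝ) ^ m * (n : ℝ) ^ n) < c) :
    ∃ Tc : ℝ, 1 < Tc ∧ ∀ T : ℝ, Tc ≤ T →
      ∃ (p : Fin m → ℤ) (q : Fin n → ℤ), q ≠ 0 ∧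
        (∏ i, |(∑ j, Y i j * (q j : ℝ)) - (p i : ℝ)|) < c / T ∧
        (∏ j, max 1 |(q j : ℝ)|) < T := by
  have : Nonempty (Fin m) := Fin.pos_iff_nonempty.mp hm
  have : Nonempty (Fin n) := Fin.pos_iff_nonempty.mp hn
  rw [div_lt_iff₀ (by positivity)] at hc
  refine ⟨max (c * m ^ m) (n ^ (n * (n - 1)) + 1),
    lt_max_of_lt_right (lt_add_of_pos_left 1 (pow_pos (Nat.cast_pos.mpr hn) _)), fun T hT ↦ ?_⟩
  rw [max_le_iff] at hT
  exact exists_multiplicative_dirichlet_approximation (ι := Fin m) (κ := Fin n) Y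
    (by simpa [mul_comm] using hc) (by simpa using hT.1)
    (by simpa using (lt_add_one _).trans_le hT.2)
end

section
/- Let R : [0,∞) → ℝ be a continuous function with R(0) ≥ 0 such that t ↦ t − nR(t) is strictly increasing and tends to ∞, and t ↦ t + mR(t) is non-decreasing. Then there exists a unique continuous non-increasing function ψ : [e^{−nR(0)}, ∞) → (0,1] such that ψ(e^{t − nR(t)}) = e^{−t − mR(t)} for all t ≥ 0. -/
/-!
Put `φ t = t - n R(t)`. The function `t ↦ e^{φ(t)}` is a continuous strictly increasing
bijection of `[0, ∞)` onto `[e^{-n R(0)}, ∞)`, and its inverse `g` is continuous and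
increasing. The functional equation forces `ψ = e^{-(g + m R ∘ g)}`, which is continuous
and, because `t + m R(t)` is non-decreasing, non-increasing with values in
`(0, e^{-m R(0)}] ⊆ (0, 1]`.
-/

open Set Filter Real

/- `g` is the inverse of the extension of `f` by `t ↦ f a + (t - a)` on `(-∞, a]`, an order
automorphism of `ℝ`. -/
theorem exists_continuous_monotone_invOn_Ici {f : ℝ → ℝ} {a : ℝ}
    (hfc : ContinuousOn f (Ici a)) (hfm : StrictMonoOn f (Ici a))
    (hf : Tendsto f atTop atTop) :
    ∃ g : ℝ → ℝ, Continuous g ∧ Monotone g ∧ MapsTo g (Ici (f a)) (Ici a) ∧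
      InvOn g f (Ici a) (Ici (f a)) := by
  set F : ℝ → ℝ := fun t => f (max a t) + min (t - a) 0 with hF
  have hFf : EqOn F f (Ici a) := fun t (ht : a ≤ t) => by simp [hF, ht]
  have hFc : Continuous F :=
    (hfc.comp_continuous (continuous_const.max continuous_id) (le_max_left a)).add
      ((continuous_id.sub continuous_const).min continuous_const)
  have hFm : StrictMono F := by
    intro s t hst
    rcases le_or_gt a s with has | hsa
    · rw [hFf has, hFf (has.trans hst.le)]
      exact hfm has (has.trans hst.le) hst
    · refine add_lt_add_of_le_of_lt ?_ ?_
      · exact hfm.monotoneOn (le_max_left a s) (le_max_left a t) (max_le_max le_rfl hst.le)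
      · rw [min_eq_left (by linarith)]
        exact lt_min (by linarith) (by linarith)
  have hFtop : Tendsto F atTop atTop :=
    hf.congr' (eventually_ge_atTop a |>.mono fun t ht => (hFf ht).symm)
  have hFbot : Tendsto F atBot atBot := by
    refine tendsto_atBot_mono' _ ?_ (tendsto_atBot_add_const_left _ (f a - a) tendsto_id)
    filter_upwards [eventually_le_atBot a] with t ht
    simp only [hF, id_eq, max_eq_left ht, min_eq_left (sub_nonpos.2 ht)]
    linarith
  set e := hFm.orderIsoOfSurjective F (hFc.surjective hFtop hFbot)
  have he : ∀ t, e t = F t := fun _ => rfl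
  have hmaps : MapsTo e.symm (Ici (f a)) (Ici a) := fun y (hy : f a ≤ y) =>
    e.le_symm_apply.2 (by rwa [he, hFf self_mem_Ici])
  refine ⟨e.symm, e.symm.continuous, e.symm.monotone, hmaps, fun t ht => ?_, fun y hy => ?_⟩
  · rw [← hFf ht, ← he, e.symm_apply_apply]
  · rw [← hFf (hmaps hy), ← he, e.apply_symm_apply]

/-- Converse direction of the Dani correspondence: a height function `R` satisfying the
monotonicity conditions determines a unique approximation function `ψ` on
`[e^(−nR(0)), ∞)`. -/
theorem dani_correspondence_converse
    (m n : ℕ) (R : ℝ → ℝ) (hR0 : 0 ≤ R 0)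
    (hRcont : ContinuousOn R (Set.Ici 0))
    (hincr : StrictMonoOn (fun t => t - n * R t) (Set.Ici 0))
    (htend : Filter.Tendsto (fun t => t - n * R t) Filter.atTop Filter.atTop)
    (hnondecr : MonotoneOn (fun t => t + m * R t) (Set.Ici 0)) :
    ∃ ψ : ℝ → ℝ,
      (ContinuousOn ψ (Set.Ici (Real.exp (-(n : ℝ) * R 0))) ∧
        AntitoneOn ψ (Set.Ici (Real.exp (-(n : ℝ) * R 0))) ∧
        (∀ x ∈ Set.Ici (Real.exp (-(n : ℝ) * R 0)), ψ x ∈ Set.Ioc (0 : ℝ) 1) ∧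
        ∀ t : ℝ, 0 ≤ t → ψ (Real.exp (t - n * R t)) = Real.exp (-t - m * R t)) ∧
      ∀ ψ' : ℝ → ℝ,
        (ContinuousOn ψ' (Set.Ici (Real.exp (-(n : ℝ) * R 0))) ∧
          AntitoneOn ψ' (Set.Ici (Real.exp (-(n : ℝ) * R 0))) ∧
          (∀ x ∈ Set.Ici (Real.exp (-(n : ℝ) * R 0)), ψ' x ∈ Set.Ioc (0 : ℝ) 1) ∧
          ∀ t : ℝ, 0 ≤ t → ψ' (Real.exp (t - n * R t)) = Real.exp (-t - m * R t)) →
        Set.EqOn ψ ψ' (Set.Ici (Real.exp (-(n : ℝ) * R 0))) := by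
  set u : ℝ → ℝ := fun t => exp (t - n * R t)
  set v : ℝ → ℝ := fun t => exp (-t - m * R t)
  have hu0 : exp (-(n : ℝ) * R 0) = u 0 := by simp [u]
  obtain ⟨g, hgc, hgm, hgmaps, hginv⟩ := exists_continuous_monotone_invOn_Ici
    (continuous_exp.comp_continuousOn (continuousOn_id.sub (continuousOn_const.mul hRcont)))
    (exp_strictMono.comp_strictMonoOn hincr) (tendsto_exp_atTop.comp htend)
  have hv : v = fun t => exp (-(t + m * R t)) := by simp only [v, neg_add']
  have hvc : ContinuousOn v (Ici 0) :=
    continuous_exp.comp_continuousOn (continuousOn_id.neg.sub (continuousOn_const.mul hRcont))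
  have hva : AntitoneOn v (Ici 0) := hv ▸ exp_monotone.comp_antitoneOn hnondecr.neg
  have hvmem : MapsTo v (Ici 0) (Ioc 0 1) := fun t ht => by
    refine ⟨exp_pos _, (hva self_mem_Ici ht ht).trans ?_⟩
    simpa [v] using mul_nonneg (Nat.cast_nonneg m) hR0
  rw [hu0]
  refine ⟨v ∘ g, ⟨hvc.comp hgc.continuousOn hgmaps,
    hva.comp_MonotoneOn (hgm.monotoneOn _) hgmaps, fun x hx => hvmem (hgmaps hx),
    fun t ht => congrArg v (hginv.1 ht)⟩, ?_⟩
  rintro ψ' ⟨-, -, -, hψ'⟩ x hx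
  rw [← hginv.2 hx]
  exact (congrArg v (hginv.1 (hgmaps hx))).trans (hψ' _ (hgmaps hx)).symm
end

section
/- Let λ ≥ 0 and ψ_λ(x) = e^{−1} for x < e and ψ_λ(x) = x^{−1}(log x)^{−λ} for x ≥ e. Let R_λ be the function associated to ψ_λ via the Dani correspondence, and let t_λ be the unique t with t − nR_λ(t) = e. Then for all t ≥ t_λ, R_λ satisfies e^{−(m+n)R_λ(t)} = (t − nR_λ(t))^{−λ}; consequently 0 ≤ R_λ(t) = O(log t) and e^{−(m+n)R_λ(t)} is comparable (up to constants depending on m,n) to t^{−λ} as t → ∞. -/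
/-!
Write `u = t - n R(t)`. For `t ≥ t_λ` monotonicity of `t ↦ t - n R(t)` gives `u ≥ e`, where
`ψ_λ(e^u) = e^{-u} u^{-λ}`, so the correspondence reads `e^{-(m+n)R(t)} = u^{-λ}`, i.e.
`(m+n) R(t) = λ log u`. Hence `R(t) ≥ 0`, so `u ≤ t` and `(m+n) R(t) ≤ λ log t`. As `λ log t = o(t)`,
eventually `u ≥ t/2`, and `u^{-λ}` lies between `t^{-λ}` and `2^λ t^{-λ}`.
-/

open Real Filter

lemma eventually_mul_log_le_mul (c : ℝ) {ε : ℝ} (hε : 0 < ε) :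
    ∀ᶠ t in atTop, c * log t ≤ ε * t := by
  filter_upwards [(isLittleO_log_id_atTop.const_mul_left c).bound hε, eventually_ge_atTop 0]
    with t hbound ht
  simpa [abs_of_nonneg ht] using (le_abs_self _).trans hbound

lemma rpow_neg_le_rpow_mul_rpow_neg {c t u lam : ℝ} (hc : 0 < c) (ht : 0 < t)
    (hu : c⁻¹ * t ≤ u) (hlam : 0 ≤ lam) : u ^ (-lam) ≤ c ^ lam * t ^ (-lam) :=
  calc u ^ (-lam) ≤ (c⁻¹ * t) ^ (-lam) :=
        rpow_le_rpow_of_nonpos (by positivity) hu (neg_nonpos.2 hlam)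
    _ = c ^ lam * t ^ (-lam) := by
        rw [mul_rpow (inv_nonneg.2 hc.le) ht.le, inv_rpow hc.le, ← rpow_neg hc.le, neg_neg]

section CorrespondenceAtAPoint

variable {a b lam t r : ℝ}

lemma exp_neg_add_mul_eq_rpow
    (h : (exp (t - b * r))⁻¹ * log (exp (t - b * r)) ^ (-lam) = exp (-t - a * r)) :
    exp (-(a + b) * r) = (t - b * r) ^ (-lam) := by
  rw [log_exp, inv_mul_eq_iff_eq_mul₀ (exp_ne_zero _), ← exp_add] at h
  rw [h]
  ring_nf

lemma add_mul_eq_mul_log (hu : 0 < t - b * r) (h : exp (-(a + b) * r) = (t - b * r) ^ (-lam)) :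
    (a + b) * r = lam * log (t - b * r) := by
  rw [rpow_def_of_pos hu, exp_eq_exp] at h
  linarith

lemma nonneg_of_exp_neg_add_mul_eq_rpow (hab : 0 < a + b) (hlam : 0 ≤ lam)
    (hu : 1 ≤ t - b * r) (h : exp (-(a + b) * r) = (t - b * r) ^ (-lam)) : 0 ≤ r := by
  rw [← mul_nonneg_iff_of_pos_left hab, add_mul_eq_mul_log (by linarith) h]
  exact mul_nonneg hlam (log_nonneg hu)

lemma sub_mul_le_of_exp_neg_add_mul_eq_rpow (hb : 0 ≤ b) (hab : 0 < a + b) (hlam : 0 ≤ lam)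
    (hu : 1 ≤ t - b * r) (h : exp (-(a + b) * r) = (t - b * r) ^ (-lam)) : t - b * r ≤ t :=
  sub_le_self t (mul_nonneg hb (nonneg_of_exp_neg_add_mul_eq_rpow hab hlam hu h))

lemma add_mul_le_mul_log (hb : 0 ≤ b) (hab : 0 < a + b) (hlam : 0 ≤ lam)
    (hu : 1 ≤ t - b * r) (h : exp (-(a + b) * r) = (t - b * r) ^ (-lam)) :
    (a + b) * r ≤ lam * log t := by
  rw [add_mul_eq_mul_log (by linarith) h]
  gcongr
  exact sub_mul_le_of_exp_neg_add_mul_eq_rpow hb hab hlam hu h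

lemma le_mul_log_of_exp_neg_add_mul_eq_rpow (hb : 0 ≤ b) (hab : 1 ≤ a + b) (hlam : 0 ≤ lam)
    (hu : 1 ≤ t - b * r) (h : exp (-(a + b) * r) = (t - b * r) ^ (-lam)) :
    r ≤ lam * log t := by
  have hr := nonneg_of_exp_neg_add_mul_eq_rpow (by linarith) hlam hu h
  have := add_mul_le_mul_log hb (by linarith) hlam hu h
  nlinarith

lemma rpow_neg_le_exp_neg_add_mul (hb : 0 ≤ b) (hab : 0 < a + b) (hlam : 0 ≤ lam)
    (hu : 1 ≤ t - b * r) (h : exp (-(a + b) * r) = (t - b * r) ^ (-lam)) :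
    t ^ (-lam) ≤ exp (-(a + b) * r) :=
  h ▸ rpow_le_rpow_of_nonpos (by linarith)
    (sub_mul_le_of_exp_neg_add_mul_eq_rpow hb hab hlam hu h) (neg_nonpos.2 hlam)

lemma exp_neg_add_mul_le_two_rpow_mul (ha : 0 ≤ a) (hb : 0 < b) (hlam : 0 ≤ lam)
    (hu : 1 ≤ t - b * r) (h : exp (-(a + b) * r) = (t - b * r) ^ (-lam))
    (hlog : lam * log t ≤ 2⁻¹ * t) :
    exp (-(a + b) * r) ≤ 2 ^ lam * t ^ (-lam) := by
  have hr := nonneg_of_exp_neg_add_mul_eq_rpow (by linarith) hlam hu h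
  have ht := sub_mul_le_of_exp_neg_add_mul_eq_rpow hb.le (by linarith) hlam hu h
  have hbr : (a + b) * r ≤ lam * log t := add_mul_le_mul_log hb.le (by linarith) hlam hu h
  have hhalf : 2⁻¹ * t ≤ t - b * r := by nlinarith
  exact h ▸ rpow_neg_le_rpow_mul_rpow_neg two_pos (by linarith) hhalf hlam

end CorrespondenceAtAPoint

theorem dani_correspondence_log_power_general
    (m n : ℕ) (hn : 1 ≤ n) (lam : ℝ) (hlam : 0 ≤ lam)
    (ψ : ℝ → ℝ)
    (hψ2 : ∀ x : ℝ, Real.exp 1 ≤ x → ψ x = x⁻¹ * Real.log x ^ (-lam))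
    (R : ℝ → ℝ)
    (hincr : StrictMonoOn (fun t => t - n * R t) (Set.Ici 0))
    (hcorr : ∀ t : ℝ, 0 ≤ t → ψ (Real.exp (t - n * R t)) = Real.exp (-t - m * R t))
    (tlam : ℝ) (htlam0 : 0 ≤ tlam) (htlam : tlam - n * R tlam = Real.exp 1) :
    (∀ t : ℝ, tlam ≤ t →
        Real.exp (-((m : ℝ) + n) * R t) = (t - n * R t) ^ (-lam)) ∧
    (∃ C : ℝ, 0 < C ∧ ∃ t0 : ℝ, ∀ t : ℝ, t0 ≤ t →
        0 ≤ R t ∧ R t ≤ C * Real.log t) ∧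
    (∃ c1 c2 : ℝ, 0 < c1 ∧ 0 < c2 ∧ ∃ t0 : ℝ, ∀ t : ℝ, t0 ≤ t →
        c1 * t ^ (-lam) ≤ Real.exp (-((m : ℝ) + n) * R t) ∧
        Real.exp (-((m : ℝ) + n) * R t) ≤ c2 * t ^ (-lam)) := by
  have hn0 : (0 : ℝ) < n := Nat.cast_pos.2 hn
  have hmn : (1 : ℝ) ≤ m + n := by
    have : (1 : ℝ) ≤ n := Nat.one_le_cast.2 hn
    linarith [Nat.cast_nonneg (α := ℝ) m]
  have hu : ∀ t, tlam ≤ t → 1 ≤ t - n * R t := fun t ht =>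
    (one_le_exp one_pos.le).trans (htlam ▸ hincr.monotoneOn htlam0 (htlam0.trans ht) ht)
  have hid : ∀ t, tlam ≤ t → exp (-((m : ℝ) + n) * R t) = (t - n * R t) ^ (-lam) := by
    intro t ht
    apply exp_neg_add_mul_eq_rpow
    rw [← hψ2 _ (exp_le_exp.2 (hu t ht))]
    exact hcorr t (htlam0.trans ht)
  refine ⟨hid, ⟨lam + 1, by linarith, tlam, fun t ht => ⟨?_, ?_⟩⟩, ?_⟩
  · exact nonneg_of_exp_neg_add_mul_eq_rpow (by linarith) hlam (hu t ht) (hid t ht)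
  · have hlog : 0 ≤ log t := log_nonneg <| (hu t ht).trans <|
      sub_mul_le_of_exp_neg_add_mul_eq_rpow hn0.le (by linarith) hlam (hu t ht) (hid t ht)
    linarith [le_mul_log_of_exp_neg_add_mul_eq_rpow hn0.le hmn hlam (hu t ht) (hid t ht)]
  · obtain ⟨t1, ht1⟩ := eventually_atTop.1 (eventually_mul_log_le_mul lam (inv_pos.2 two_pos))
    refine ⟨1, 2 ^ lam, one_pos, by positivity, max tlam t1, fun t ht => ?_⟩
    have htl : tlam ≤ t := (le_max_left _ _).trans ht
    rw [one_mul]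
    exact ⟨rpow_neg_le_exp_neg_add_mul hn0.le (by linarith) hlam (hu t htl) (hid t htl),
      exp_neg_add_mul_le_two_rpow_mul (Nat.cast_nonneg m) hn0 hlam (hu t htl) (hid t htl)
        (ht1 t ((le_max_right _ _).trans ht))⟩

/-- For `ψ_λ(x) = e⁻¹` for `x < e` and `ψ_λ(x) = x⁻¹ (log x)^(−λ)` for `x ≥ e`, the Dani
function `R_λ` satisfies `e^{−(m+n)R_λ(t)} = (t − nR_λ(t))^{−λ}` for `t ≥ t_λ`; consequently
`0 ≤ R_λ(t) = O(log t)` and `e^{−(m+n)R_λ(t)}` is comparable to `t^{−λ}`. -/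
theorem dani_correspondence_log_power
    (m n : ℕ) (hm : 1 ≤ m) (hn : 1 ≤ n) (lam : ℝ) (hlam : 0 ≤ lam)
    (ψ : ℝ → ℝ)
    (hψ1 : ∀ x : ℝ, x < Real.exp 1 → ψ x = Real.exp (-1))
    (hψ2 : ∀ x : ℝ, Real.exp 1 ≤ x → ψ x = x⁻¹ * Real.log x ^ (-lam))
    (R : ℝ → ℝ)
    (hRcont : ContinuousOn R (Set.Ici 0))
    (hincr : StrictMonoOn (fun t => t - n * R t) (Set.Ici 0))
    (htend : Filter.Tendsto (fun t => t - n * R t) Filter.atTop Filter.atTop)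
    (hnondecr : MonotoneOn (fun t => t + m * R t) (Set.Ici 0))
    (hcorr : ∀ t : ℝ, 0 ≤ t → ψ (Real.exp (t - n * R t)) = Real.exp (-t - m * R t))
    (tlam : ℝ) (htlam0 : 0 ≤ tlam) (htlam : tlam - n * R tlam = Real.exp 1) :
    (∀ t : ℝ, tlam ≤ t →
        Real.exp (-((m : ℝ) + n) * R t) = (t - n * R t) ^ (-lam)) ∧
    (∃ C : ℝ, 0 < C ∧ ∃ t0 : ℝ, ∀ t : ℝ, t0 ≤ t →
        0 ≤ R t ∧ R t ≤ C * Real.log t) ∧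
    (∃ c1 c2 : ℝ, 0 < c1 ∧ 0 < c2 ∧ ∃ t0 : ℝ, ∀ t : ℝ, t0 ≤ t →
        c1 * t ^ (-lam) ≤ Real.exp (-((m : ℝ) + n) * R t) ∧
        Real.exp (-((m : ℝ) + n) * R t) ≤ c2 * t ^ (-lam)) :=
  dani_correspondence_log_power_general m n hn lam hlam ψ hψ2 R hincr hcorr tlam htlam0 htlam
end

section
/- Transference, part (a): Let m,n ≥ 1, Y ∈ ℝ^{m×n}, 0 < c < 1, t > 0, and set R_c = (1/(m+n)) log(1/c). Suppose there exists a = (a_1,…,a_{m+n}) with Σ_{i≤m} a_i = t = −Σ_{j>m} a_j, a_i > −R_c for i ≤ m, a_{m+j} < −R_c for j ≤ n, such that δ(exp(a)·x_Y) < c^{1/(m+n)}. Then there exists a' with Σ_{i≤m} a'_i = t = −Σ_{j>m} a'_{m+j}, a'_i > 0 for i ≤ m, a'_{m+j} < 0 for j ≤ n, such that δ(exp(a')·x_Y) < c^{1/(m(m+n))}. -/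
open scoped BigOperators

/-- The lattice `x_Y = ((I_m, Y),(0,I_n))·ℤ^{m+n}`, viewed inside `ℝ^m × ℝ^n`. -/
def xYset (m n : ℕ) (Y : Fin m → Fin n → ℝ) : Set ((Fin m → ℝ) × (Fin n → ℝ)) :=
  {v | ∃ (p : Fin m → ℤ) (q : Fin n → ℤ),
    v.1 = (fun i => (p i : ℝ) + ∑ j, Y i j * (q j : ℝ)) ∧ v.2 = fun j => (q j : ℝ)}

/-- Action of the diagonal element `exp(a)` on subsets of `ℝ^m × ℝ^n`. -/
def diagAct {m n : ℕ} (a : Fin m → ℝ) (b : Fin n → ℝ)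
    (S : Set ((Fin m → ℝ) × (Fin n → ℝ))) : Set ((Fin m → ℝ) × (Fin n → ℝ)) :=
  (fun v : (Fin m → ℝ) × (Fin n → ℝ) =>
    ((fun i => Real.exp (a i) * v.1 i), fun j => Real.exp (b j) * v.2 j)) '' S

/-- `δ(S)`: shortest sup-norm length of a nonzero vector of `S`. -/
noncomputable def deltaSet {m n : ℕ} (S : Set ((Fin m → ℝ) × (Fin n → ℝ))) : ℝ :=
  sInf {x | ∃ v ∈ S, v ≠ 0 ∧ ‖v‖ = x}

/-!
Let `θ = c ^ (1 / (m (m + n)))`, so that `c ^ (1 / (m + n)) = θ ^ m`, and let `exp(a, b) · x` be a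
nonzero vector of length `ν < θ ^ m`, with `x = (p + Y q, q)`. Since every `a i > -R_c`, `q ≠ 0`.
Let `K` be the set of the `k < m` indices with `a i ≤ 0`. Dirichlet's theorem gives `0 < N ≤ T` and
integers `r i` with `|N x_i - r_i| ≤ ε` for `i ∈ K`. Give the coordinates in `K` a small weight
`s > 0` and shrink the positive `a i` to keep the total `t`; then the lattice vector `N x - r` has
length at most `max (e^s ε) (T ν)`. With `T ε ^ k` just above `1`, both terms are below `θ`
because `ν < θ ^ m ≤ θ ^ (k + 1)`.
-/

open Finset
open MeasureTheory Filter Topology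
open scoped ENNReal

theorem exists_int_ne_zero_mem_of_two_pow_card_lt_volume {ι : Type*} [Fintype ι]
    {s : Set (ι → ℝ)} (h_symm : ∀ y ∈ s, -y ∈ s) (h_conv : Convex ℝ s)
    (h_vol : 2 ^ Fintype.card ι < volume s) :
    ∃ z : ι → ℤ, z ≠ 0 ∧ (fun i => (z i : ℝ)) ∈ s := by
  have : Countable (Submodule.span ℤ (Set.range (Pi.basisFun ℝ ι))).toAddSubgroup :=
    inferInstanceAs (Countable (Submodule.span ℤ _))
  have h_fund : volume (ZSpan.fundamentalDomain (Pi.basisFun ℝ ι)) = 1 := by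
    rw [ZSpan.fundamentalDomain_pi_basisFun, volume_pi_pi]
    simp [Real.volume_Ico]
  obtain ⟨g, hg0, hgs⟩ := exists_ne_zero_mem_lattice_of_measure_mul_two_pow_lt_measure
    (ZSpan.isAddFundamentalDomain' (Pi.basisFun ℝ ι) volume) h_symm h_conv
    (by simpa [h_fund] using h_vol)
  choose z hz using fun i => ((Pi.basisFun ℝ ι).mem_span_iff_repr_mem ℤ _).mp g.2 i
  have hgz : (g : ι → ℝ) = fun i => (z i : ℝ) := by
    funext i; simpa using (hz i).symm
  refine ⟨z, fun h => hg0 ?_, hgz ▸ hgs⟩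
  ext i
  simp [hgz, h]

section Dirichlet

variable {ι : Type*}

/-- The box `|y none| ≤ T`, `|x i * y none - y (some i)| ≤ ε` of Dirichlet's theorem is the
preimage of a coordinate box under this involution. -/
def dirichletShear (x : ι → ℝ) : (Option ι → ℝ) →ₗ[ℝ] (Option ι → ℝ) :=
  LinearMap.pi fun o => o.elim (LinearMap.proj none)
    fun i => x i • LinearMap.proj none - LinearMap.proj (some i)

@[simp] lemma dirichletShear_apply_none (x : ι → ℝ) (y : Option ι → ℝ) :
    dirichletShear x y none = y none := rfl

@[simp] lemma dirichletShear_apply_some (x : ι → ℝ) (y : Option ι → ℝ) (i : ι) :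
    dirichletShear x y (some i) = x i * y none - y (some i) := rfl

lemma dirichletShear_comp_self (x : ι → ℝ) :
    (dirichletShear x).comp (dirichletShear x) = LinearMap.id := by
  ext y o
  cases o <;> simp

lemma abs_det_dirichletShear [Fintype ι] (x : ι → ℝ) :
    |LinearMap.det (dirichletShear x)| = 1 := by
  have h := congrArg LinearMap.det (dirichletShear_comp_self x)
  rw [LinearMap.det_comp, LinearMap.det_id, ← sq] at h
  exact (pow_eq_one_iff_of_nonneg (abs_nonneg _) two_ne_zero).mp (by rw [sq_abs, h])

lemma exists_int_ne_zero_abs_dirichletShear_le [Fintype ι] (x : ι → ℝ) {T ε : ℝ}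
    (hε0 : 0 < ε) (hT : 1 < T * ε ^ Fintype.card ι) :
    ∃ z : Option ι → ℤ, z ≠ 0 ∧ |(z none : ℝ)| ≤ T ∧
      ∀ i, |x i * z none - z (some i)| ≤ ε := by
  let w : Option ι → ℝ := fun o => o.elim T fun _ => ε
  let s := dirichletShear x ⁻¹' Set.univ.pi fun o => Set.Icc (-w o) (w o)
  have h_vol : volume s = ∏ o, ENNReal.ofReal (2 * w o) := by
    have hdet : LinearMap.det (dirichletShear x) ≠ 0 := by
      intro h; simpa [h] using abs_det_dirichletShear x
    rw [Measure.addHaar_preimage_linearMap _ hdet, abs_inv, abs_det_dirichletShear, inv_one,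
      ENNReal.ofReal_one, one_mul, volume_pi_pi]
    simp only [Real.volume_Icc, sub_neg_eq_add, ← two_mul]
  have h_lt : 2 ^ Fintype.card (Option ι) < volume s := by
    have hT0 : 0 < T := pos_of_mul_pos_left (one_pos.trans hT) (by positivity)
    rw [h_vol, Fintype.prod_option, Fintype.card_option]
    simp only [w, Option.elim_none, Option.elim_some, Finset.prod_const, Finset.card_univ]
    rw [← ENNReal.ofReal_pow (by positivity), ← ENNReal.ofReal_mul (by positivity),
      ← ENNReal.ofReal_ofNat, ← ENNReal.ofReal_pow (by positivity),
      ENNReal.ofReal_lt_ofReal_iff (by positivity)]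
    calc (2 : ℝ) ^ (Fintype.card ι + 1) = 2 ^ (Fintype.card ι + 1) * 1 := (mul_one _).symm
      _ < 2 ^ (Fintype.card ι + 1) * (T * ε ^ Fintype.card ι) := by gcongr
      _ = 2 * T * (2 * ε) ^ Fintype.card ι := by ring
  obtain ⟨z, hz0, hzs⟩ := exists_int_ne_zero_mem_of_two_pow_card_lt_volume (s := s)
    (fun y hy o _ => by simpa [and_comm, neg_le] using hy o trivial)
    ((convex_pi fun _ _ => convex_Icc _ _).linear_preimage _) h_lt
  exact ⟨z, hz0, abs_le.mpr (hzs none trivial), fun i => abs_le.mpr (hzs (some i) trivial)⟩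

theorem exists_int_forall_abs_mul_sub_le [Fintype ι] (x : ι → ℝ) {T ε : ℝ} (hε0 : 0 < ε)
    (hε1 : ε < 1) (hT : 1 < T * ε ^ Fintype.card ι) :
    ∃ (N : ℤ) (r : ι → ℤ), 0 < N ∧ (N : ℝ) ≤ T ∧ ∀ i, |N * x i - r i| ≤ ε := by
  obtain ⟨z, hz0, hzT, hzε⟩ := exists_int_ne_zero_abs_dirichletShear_le x hε0 hT
  have hz_none : z none ≠ 0 := by
    intro h
    refine hz0 (funext fun o => o.rec h fun i => ?_)
    have hi := hzε i
    rw [h, Int.cast_zero, mul_zero, zero_sub, abs_neg, ← Int.cast_abs] at hi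
    exact Int.abs_lt_one_iff.mp (by exact_mod_cast hi.trans_lt hε1)
  rcases hz_none.lt_or_gt with hneg | hpos
  · refine ⟨-z none, fun i => -z (some i), by omega, ?_, fun i => ?_⟩
    · rw [abs_of_neg (Int.cast_lt_zero.mpr hneg)] at hzT
      exact_mod_cast hzT
    · rw [← abs_neg]
      convert hzε i using 2
      push_cast
      ring
  · refine ⟨z none, fun i => z (some i), hpos, ?_, fun i => ?_⟩
    · rwa [abs_of_pos (Int.cast_pos.mpr hpos)] at hzT
    · rw [mul_comm]
      exact hzε i

end Dirichlet

lemma card_filter_nonpos_lt_card_of_sum_pos {ι : Type*} [Fintype ι] {a : ι → ℝ}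
    (h : 0 < ∑ i, a i) : #{i | a i ≤ 0} < Fintype.card ι := by
  obtain ⟨i, hi⟩ : ∃ i, 0 < a i := by
    by_contra! h'
    exact (sum_nonpos fun i _ => h' i).not_gt h
  exact card_lt_univ_of_notMem (x := i) (by simpa using hi)

lemma exists_pos_le_of_sum_eq {ι : Type*} [Fintype ι] {a : ι → ℝ} {s t : ℝ}
    (ha : ∑ i, a i = t) (hs : 0 < s) (hst : #{i | a i ≤ 0} * s < t) :
    ∃ a' : ι → ℝ, ∑ i, a' i = t ∧ (∀ i, 0 < a' i) ∧ (∀ i, a i ≤ 0 → a' i = s) ∧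
      ∀ i, 0 < a i → a' i ≤ a i := by
  classical
  set k : ℕ := #{i | a i ≤ 0}
  set P := ∑ i with ¬a i ≤ 0, a i
  have htP : t ≤ P := by
    have : ∑ i with a i ≤ 0, a i ≤ 0 := sum_nonpos fun i hi => (mem_filter.mp hi).2
    linarith [sum_filter_add_sum_filter_not univ (fun i => a i ≤ 0) a]
  have hks : 0 ≤ k * s := by positivity
  set l := (t - k * s) / P
  have hl0 : 0 < l := div_pos (by linarith) (by linarith)
  have hl1 : l ≤ 1 := (div_le_one (by linarith)).mpr (by linarith)
  refine ⟨fun i => if a i ≤ 0 then s else l * a i, ?_, fun i => ?_, fun i hi => if_pos hi,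
    fun i hi => ?_⟩
  · rw [sum_ite, sum_const, nsmul_eq_mul, ← mul_sum, div_mul_cancel₀ _ (by linarith)]
    ring
  · dsimp only
    split_ifs with hi
    exacts [hs, mul_pos hl0 (not_le.mp hi)]
  · dsimp only
    rw [if_neg hi.not_ge]
    exact mul_le_of_le_one_left hi.le hl1

lemma exists_dirichlet_params {k : ℕ} {t θ ν : ℝ} (ht : 0 < t) (hθ0 : 0 < θ) (hθ1 : θ ≤ 1)
    (hν : ν < θ ^ (k + 1)) :
    ∃ s T ε : ℝ, 0 < s ∧ k * s < t ∧ 0 < ε ∧ ε < 1 ∧ 1 < T * ε ^ k ∧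
      Real.exp s * ε < θ ∧ T * ν < θ := by
  have h : ∀ᶠ s in 𝓝[>] (0 : ℝ),
      k * s < t ∧ Real.exp ((2 * k + 1) * s) * ν < θ ^ (k + 1) :=
    nhdsWithin_le_nhds <|
      (ContinuousAt.eventually_lt (by fun_prop) continuousAt_const (by simpa using ht)).and
        (ContinuousAt.eventually_lt (by fun_prop) continuousAt_const (by simpa using hν))
  obtain ⟨s, ⟨hst, hsν⟩, hs : 0 < s⟩ := (h.and self_mem_nhdsWithin).exists
  -- `T * ε ^ k = exp s`, and `exp s * ε = θ * exp (-s)`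
  have hθk : 0 < θ ^ k := pow_pos hθ0 k
  refine ⟨s, Real.exp ((2 * k + 1) * s) / θ ^ k, θ * Real.exp (-(2 * s)), hs, hst,
    by positivity, ?_, ?_, ?_, ?_⟩
  · calc θ * Real.exp (-(2 * s)) ≤ 1 * Real.exp (-(2 * s)) := by gcongr
      _ < 1 := by rw [one_mul, Real.exp_lt_one_iff]; linarith
  · have : Real.exp ((2 * k + 1) * s) / θ ^ k * (θ * Real.exp (-(2 * s))) ^ k = Real.exp s := by
      rw [mul_pow, ← Real.exp_nat_mul, div_mul_eq_mul_div, mul_div_assoc,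
        mul_div_cancel_left₀ _ hθk.ne', ← Real.exp_add]
      ring_nf
    rw [this, Real.one_lt_exp_iff]; exact hs
  · calc Real.exp s * (θ * Real.exp (-(2 * s))) = θ * Real.exp (-s) := by
          rw [mul_left_comm, ← Real.exp_add]; ring_nf
      _ < θ := mul_lt_of_lt_one_right hθ0 (by rw [Real.exp_lt_one_iff]; linarith)
  · rw [div_mul_eq_mul_div, div_lt_iff₀ hθk, ← pow_succ']
    exact hsν

section Lattice

variable {m n : ℕ}

def xYpoint (Y : Fin m → Fin n → ℝ) (p : Fin m → ℤ) (q : Fin n → ℤ) :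
    (Fin m → ℝ) × (Fin n → ℝ) :=
  (fun i => p i + ∑ j, Y i j * q j, fun j => q j)

lemma mem_xYset_iff {Y : Fin m → Fin n → ℝ} {v : (Fin m → ℝ) × (Fin n → ℝ)} :
    v ∈ xYset m n Y ↔ ∃ p q, xYpoint Y p q = v := by
  constructor
  · rintro ⟨p, q, h₁, h₂⟩
    exact ⟨p, q, Prod.ext h₁.symm h₂.symm⟩
  · rintro ⟨p, q, rfl⟩
    exact ⟨p, q, rfl, rfl⟩

lemma xYpoint_mem_xYset (Y : Fin m → Fin n → ℝ) (p : Fin m → ℤ) (q : Fin n → ℤ) :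
    xYpoint Y p q ∈ xYset m n Y :=
  mem_xYset_iff.mpr ⟨p, q, rfl⟩

lemma xYpoint_smul_sub_fst (Y : Fin m → Fin n → ℝ) (p r : Fin m → ℤ) (q : Fin n → ℤ) (N : ℤ)
    (i : Fin m) :
    (xYpoint Y (N • p - r) (N • q)).1 i = N * (xYpoint Y p q).1 i - r i := by
  simp [xYpoint, mul_add, mul_sum, mul_left_comm _ (N : ℝ)]
  ring

@[simp] lemma xYpoint_snd (Y : Fin m → Fin n → ℝ) (p : Fin m → ℤ) (q : Fin n → ℤ) (j : Fin n) :
    (xYpoint Y p q).2 j = q j :=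
  rfl

noncomputable def diagScale (a : Fin m → ℝ) (b : Fin n → ℝ) (v : (Fin m → ℝ) × (Fin n → ℝ)) :
    (Fin m → ℝ) × (Fin n → ℝ) :=
  (fun i => Real.exp (a i) * v.1 i, fun j => Real.exp (b j) * v.2 j)

lemma diagScale_mem_diagAct (a : Fin m → ℝ) (b : Fin n → ℝ)
    {S : Set ((Fin m → ℝ) × (Fin n → ℝ))} {v : (Fin m → ℝ) × (Fin n → ℝ)} (hv : v ∈ S) :
    diagScale a b v ∈ diagAct a b S :=
  Set.mem_image_of_mem _ hv

lemma norm_diagScale_le_iff {a : Fin m → ℝ} {b : Fin n → ℝ} {v : (Fin m → ℝ) × (Fin n → ℝ)}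
    {ρ : ℝ} (hρ : 0 ≤ ρ) :
    ‖diagScale a b v‖ ≤ ρ ↔
      (∀ i, Real.exp (a i) * |v.1 i| ≤ ρ) ∧ ∀ j, Real.exp (b j) * |v.2 j| ≤ ρ := by
  simp [diagScale, Prod.norm_def, pi_norm_le_iff_of_nonneg hρ]

lemma exp_mul_abs_fst_le_norm_diagScale (a : Fin m → ℝ) (b : Fin n → ℝ)
    (v : (Fin m → ℝ) × (Fin n → ℝ)) (i : Fin m) :
    Real.exp (a i) * |v.1 i| ≤ ‖diagScale a b v‖ :=
  ((norm_diagScale_le_iff (norm_nonneg _)).mp le_rfl).1 i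

lemma exp_mul_abs_snd_le_norm_diagScale (a : Fin m → ℝ) (b : Fin n → ℝ)
    (v : (Fin m → ℝ) × (Fin n → ℝ)) (j : Fin n) :
    Real.exp (b j) * |v.2 j| ≤ ‖diagScale a b v‖ :=
  ((norm_diagScale_le_iff (norm_nonneg _)).mp le_rfl).2 j

lemma diagScale_xYpoint_ne_zero (Y : Fin m → Fin n → ℝ) (a : Fin m → ℝ) (b : Fin n → ℝ)
    (p : Fin m → ℤ) {q : Fin n → ℤ} (hq : q ≠ 0) : diagScale a b (xYpoint Y p q) ≠ 0 := by
  obtain ⟨j, hj⟩ := Function.ne_iff.mp hq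
  intro h
  have := congr_fun (congr_arg Prod.snd h) j
  simp only [diagScale, xYpoint, Prod.snd_zero, Pi.zero_apply, mul_eq_zero] at this
  exact this.elim (Real.exp_ne_zero _) (by exact_mod_cast hj)

end Lattice

section Delta

variable {m n : ℕ} {S : Set ((Fin m → ℝ) × (Fin n → ℝ))}

lemma bddBelow_norms_ne_zero : BddBelow {x | ∃ v ∈ S, v ≠ 0 ∧ ‖v‖ = x} :=
  ⟨0, by rintro _ ⟨v, -, -, rfl⟩; exact norm_nonneg v⟩

lemma deltaSet_le_norm {v : (Fin m → ℝ) × (Fin n → ℝ)} (hv : v ∈ S) (h0 : v ≠ 0) :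
    deltaSet S ≤ ‖v‖ :=
  csInf_le bddBelow_norms_ne_zero ⟨v, hv, h0, rfl⟩

lemma exists_ne_zero_norm_lt_of_deltaSet_lt (hS : ∃ v ∈ S, v ≠ 0) {r : ℝ}
    (h : deltaSet S < r) : ∃ v ∈ S, v ≠ 0 ∧ ‖v‖ < r := by
  obtain ⟨v, hv, h0⟩ := hS
  obtain ⟨_, ⟨w, hw, hw0, rfl⟩, hlt⟩ :=
    (csInf_lt_iff bddBelow_norms_ne_zero ⟨_, v, hv, h0, rfl⟩).mp h
  exact ⟨w, hw, hw0, hlt⟩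

end Delta

section Transference

variable {m n : ℕ} {Y : Fin m → Fin n → ℝ} {a : Fin m → ℝ} {b : Fin n → ℝ}

lemma exists_xYpoint_norm_diagScale_lt (hm : 0 < m) {r : ℝ}
    (h : deltaSet (diagAct a b (xYset m n Y)) < r) :
    ∃ p q, diagScale a b (xYpoint Y p q) ≠ 0 ∧ ‖diagScale a b (xYpoint Y p q)‖ < r := by
  have hS : ∃ v ∈ diagAct a b (xYset m n Y), v ≠ 0 := by
    refine ⟨_, diagScale_mem_diagAct a b (xYpoint_mem_xYset Y 1 0), fun h0 => ?_⟩
    have := congr_fun (congr_arg Prod.fst h0) ⟨0, hm⟩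
    simp [diagScale, xYpoint] at this
  obtain ⟨_, ⟨v, hv, rfl⟩, hne, hlt⟩ := exists_ne_zero_norm_lt_of_deltaSet_lt hS h
  obtain ⟨p, q, rfl⟩ := mem_xYset_iff.mp hv
  exact ⟨p, q, hne, hlt⟩

lemma ne_zero_of_norm_diagScale_xYpoint_lt {p : Fin m → ℤ} {q : Fin n → ℤ} {ρ : ℝ}
    (ha : ∀ i, ρ ≤ Real.exp (a i)) (hne : diagScale a b (xYpoint Y p q) ≠ 0)
    (hlt : ‖diagScale a b (xYpoint Y p q)‖ < ρ) : q ≠ 0 := by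
  rintro rfl
  have hp : p = 0 := by
    funext i
    have hi := (exp_mul_abs_fst_le_norm_diagScale a b (xYpoint Y p 0) i).trans_lt
      (hlt.trans_le (ha i))
    rw [show (xYpoint Y p 0).1 i = p i by simp [xYpoint]] at hi
    have : |(p i : ℝ)| < 1 :=
      lt_of_mul_lt_mul_left (by rwa [mul_one]) (Real.exp_pos (a i)).le
    exact Int.abs_lt_one_iff.mp (by exact_mod_cast this)
  subst hp
  simp [diagScale, xYpoint, Prod.ext_iff, funext_iff] at hne

lemma norm_diagScale_xYpoint_smul_sub_le {K : Finset (Fin m)} {a' : Fin m → ℝ}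
    {p r : Fin m → ℤ} {q : Fin n → ℤ} {N : ℤ} {s T ε : ℝ} (hN : 0 ≤ N) (hNT : (N : ℝ) ≤ T)
    (hε : 0 ≤ ε)
    (hK : ∀ i ∈ K, a' i = s ∧ |N * (xYpoint Y p q).1 i - r i| ≤ ε)
    (hKc : ∀ i ∉ K, a' i ≤ a i ∧ r i = 0) :
    ‖diagScale a' b (xYpoint Y (N • p - r) (N • q))‖ ≤
      max (Real.exp s * ε) (T * ‖diagScale a b (xYpoint Y p q)‖) := by
  set ν := ‖diagScale a b (xYpoint Y p q)‖
  have hN' : (0 : ℝ) ≤ N := by exact_mod_cast hN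
  have hNν : N * ν ≤ max (Real.exp s * ε) (T * ν) :=
    (mul_le_mul_of_nonneg_right hNT (norm_nonneg _)).trans (le_max_right _ _)
  rw [norm_diagScale_le_iff (by positivity)]
  refine ⟨fun i => ?_, fun j => ?_⟩
  · rw [xYpoint_smul_sub_fst]
    by_cases hi : i ∈ K
    · obtain ⟨hs, hr⟩ := hK i hi
      calc Real.exp (a' i) * |N * (xYpoint Y p q).1 i - r i| ≤ Real.exp s * ε := by
            rw [hs]; gcongr
        _ ≤ _ := le_max_left _ _
    · obtain ⟨ha', hr⟩ := hKc i hi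
      calc Real.exp (a' i) * |N * (xYpoint Y p q).1 i - r i|
          = N * (Real.exp (a' i) * |(xYpoint Y p q).1 i|) := by
            rw [hr, Int.cast_zero, sub_zero, abs_mul, abs_of_nonneg hN']; ring
        _ ≤ N * (Real.exp (a i) * |(xYpoint Y p q).1 i|) := by gcongr
        _ ≤ N * ν := by gcongr; exact exp_mul_abs_fst_le_norm_diagScale a b _ i
        _ ≤ _ := hNν
  · calc Real.exp (b j) * |(xYpoint Y (N • p - r) (N • q)).2 j|
        = N * (Real.exp (b j) * |(xYpoint Y p q).2 j|) := by
          simp only [xYpoint_snd, Pi.smul_apply, smul_eq_mul, Int.cast_mul, abs_mul,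
            abs_of_nonneg hN']
          ring
      _ ≤ N * ν := by gcongr; exact exp_mul_abs_snd_le_norm_diagScale a b _ j
      _ ≤ _ := hNν

theorem exists_pos_deltaSet_diagAct_lt {p : Fin m → ℤ} {q : Fin n → ℤ} {t θ : ℝ}
    (ht : 0 < t) (hθ0 : 0 < θ) (hθ1 : θ ≤ 1) (ha : ∑ i, a i = t) (hq : q ≠ 0)
    (hv : ‖diagScale a b (xYpoint Y p q)‖ < θ ^ (#{i | a i ≤ 0} + 1)) :
    ∃ a' : Fin m → ℝ, ∑ i, a' i = t ∧ (∀ i, 0 < a' i) ∧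
      deltaSet (diagAct a' b (xYset m n Y)) < θ := by
  classical
  set K : Finset (Fin m) := {i | a i ≤ 0}
  obtain ⟨s, T, ε, hs, hst, hε0, hε1, hTε, hsε, hTν⟩ :=
    exists_dirichlet_params ht hθ0 hθ1 hv
  obtain ⟨a', ha'sum, ha'pos, ha'K, ha'le⟩ := exists_pos_le_of_sum_eq ha hs hst
  obtain ⟨N, r, hN, hNT, hr⟩ := exists_int_forall_abs_mul_sub_le
    (fun i : K => (xYpoint Y p q).1 i) hε0 hε1 (by rwa [Fintype.card_coe])
  set r' : Fin m → ℤ := fun i => if h : i ∈ K then r ⟨i, h⟩ else 0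
  refine ⟨a', ha'sum, ha'pos, ?_⟩
  calc deltaSet (diagAct a' b (xYset m n Y))
      ≤ ‖diagScale a' b (xYpoint Y (N • p - r') (N • q))‖ :=
        deltaSet_le_norm (diagScale_mem_diagAct _ _ (xYpoint_mem_xYset _ _ _))
          (diagScale_xYpoint_ne_zero _ _ _ _ (smul_ne_zero hN.ne' hq))
    _ ≤ max (Real.exp s * ε) (T * ‖diagScale a b (xYpoint Y p q)‖) :=
        norm_diagScale_xYpoint_smul_sub_le hN.le hNT hε0.le
          (fun i hi => ⟨ha'K i (mem_filter.mp hi).2, by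
            rw [show r' i = r ⟨i, hi⟩ from dif_pos hi]; exact hr ⟨i, hi⟩⟩)
          (fun i hi => ⟨ha'le i (by simpa [K] using hi), dif_neg hi⟩)
    _ < θ := max_lt hsε hTν

end Transference

theorem transference_a_general
    (m n : ℕ) (hm : 1 ≤ m) (Y : Fin m → Fin n → ℝ)
    (c : ℝ) (hc0 : 0 < c) (hc1 : c < 1) (t : ℝ) (ht : 0 < t)
    (a : Fin m → ℝ) (b : Fin n → ℝ)
    (ha : ∑ i, a i = t) (hb : ∑ j, b j = -t)
    (ha' : ∀ i, -((1 / ((m : ℝ) + n)) * Real.log (1 / c)) < a i)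
    (hb' : ∀ j, b j < -((1 / ((m : ℝ) + n)) * Real.log (1 / c)))
    (hδ : deltaSet (diagAct a b (xYset m n Y)) < c ^ ((1 : ℝ) / ((m : ℝ) + n))) :
    ∃ (a' : Fin m → ℝ) (b' : Fin n → ℝ),
      (∑ i, a' i = t) ∧ (∑ j, b' j = -t) ∧
      (∀ i, 0 < a' i) ∧ (∀ j, b' j < 0) ∧
      deltaSet (diagAct a' b' (xYset m n Y)) <
        c ^ ((1 : ℝ) / ((m : ℝ) * ((m : ℝ) + n))) := by
  have hR : Real.exp (-((1 / ((m : ℝ) + n)) * Real.log (1 / c))) =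
      c ^ ((1 : ℝ) / ((m : ℝ) + n)) := by
    rw [Real.rpow_def_of_pos hc0, one_div c, Real.log_inv]
    ring_nf
  set θ := c ^ ((1 : ℝ) / ((m : ℝ) * ((m : ℝ) + n)))
  have hθm : θ ^ m = c ^ ((1 : ℝ) / ((m : ℝ) + n)) := by
    rw [← Real.rpow_natCast, ← Real.rpow_mul hc0.le]
    field_simp
  have hθ0 : 0 < θ := by positivity
  have hθ1 : θ ≤ 1 := Real.rpow_le_one hc0.le hc1.le (by positivity)
  obtain ⟨p, q, hne, hlt⟩ := exists_xYpoint_norm_diagScale_lt hm hδ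
  have hq : q ≠ 0 := ne_zero_of_norm_diagScale_xYpoint_lt
    (fun i => hR ▸ (Real.exp_lt_exp.mpr (ha' i)).le) hne hlt
  have hk := card_filter_nonpos_lt_card_of_sum_pos (ha ▸ ht)
  obtain ⟨a', ha'sum, ha'pos, hδ'⟩ := exists_pos_deltaSet_diagAct_lt ht hθ0 hθ1 ha hq
    (hlt.trans_le (hθm ▸ pow_le_pow_of_le_one hθ0.le hθ1 (by simpa using hk)))
  have hR0 : 0 < (1 / ((m : ℝ) + n)) * Real.log (1 / c) :=
    mul_pos (by positivity) (Real.log_pos (one_lt_one_div hc0 hc1))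
  exact ⟨a', b, ha'sum, hb, ha'pos, fun j => (hb' j).trans (neg_neg_of_pos hR0), hδ'⟩

/-- Transference Lemma, part (a). -/
theorem transference_a
    (m n : ℕ) (hm : 1 ≤ m) (hn : 1 ≤ n) (Y : Fin m → Fin n → ℝ)
    (c : ℝ) (hc0 : 0 < c) (hc1 : c < 1) (t : ℝ) (ht : 0 < t)
    (a : Fin m → ℝ) (b : Fin n → ℝ)
    (ha : ∑ i, a i = t) (hb : ∑ j, b j = -t)
    (ha' : ∀ i, -((1 / ((m : ℝ) + n)) * Real.log (1 / c)) < a i)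
    (hb' : ∀ j, b j < -((1 / ((m : ℝ) + n)) * Real.log (1 / c)))
    (hδ : deltaSet (diagAct a b (xYset m n Y)) < c ^ ((1 : ℝ) / ((m : ℝ) + n))) :
    ∃ (a' : Fin m → ℝ) (b' : Fin n → ℝ),
      (∑ i, a' i = t) ∧ (∑ j, b' j = -t) ∧
      (∀ i, 0 < a' i) ∧ (∀ j, b' j < 0) ∧
      deltaSet (diagAct a' b' (xYset m n Y)) <
        c ^ ((1 : ℝ) / ((m : ℝ) * ((m : ℝ) + n))) :=
  transference_a_general m n hm Y c hc0 hc1 t ht a b ha hb ha' hb' hδ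
end

section
/- Covering lemma: Let (X,d) be a metric space, h ∈ ℕ, and let 0 = α_0 < β_1 < α_1 = 3β_1 < β_2 < ⋯ < β_h < α_h = 3β_h < β_{h+1} be real numbers. For a partition Q of {1,…,h}, set ρ^Q(x) := max over blocks I ∈ Q of max{d(x_i,x_j) : i,j ∈ I}, and ρ_Q(x) := min over distinct blocks I ≠ I' in Q of min{d(x_i,x_j) : i ∈ I, j ∈ I'}. Let Δ_Q(α,β) := {x ∈ X^h : ρ^Q(x) ≤ α and ρ_Q(x) > β} and Δ(α) := {x ∈ X^h : max_{i,j} d(x_i,x_j) ≤ α}. Then X^h = Δ(β_{h+1}) ∪ ⋃_{l=0}^h ⋃_{Q : #Q ≥ 2} Δ_Q(α_l, β_{l+1}). -/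
/-!
Start from the partition of `{1,…,h}` into singletons, whose blocks have diameter `0 = α₀`.
At stage `l`, either the blocks are `β_{l+1}`-separated and we stop, or two of them come within
`β_{l+1}` of each other; merging them leaves blocks of diameter at most
`2α_l + β_{l+1} ≤ 3β_{l+1} = α_{l+1}`. Each merge removes a block, so the process stops at some
`l ≤ h`, and if only one block is left, all distances are at most `α_l < β_{l+1} ≤ β_{h+1}`.
Partitions are handled as labellings `c : ι → κ`, the blocks being the fibres of `c`.
-/

open Finset

namespace Clustering

section Labelling

variable {ι κ X : Type*} [DecidableEq κ] [PseudoMetricSpace X]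

def mergeLabels (c : ι → κ) (k k' : κ) : ι → κ := fun i => if c i = k' then k else c i

lemma image_mergeLabels [Fintype ι] {c : ι → κ} {p q : ι} (hpq : c p ≠ c q) :
    univ.image (mergeLabels c (c p) (c q)) = (univ.image c).erase (c q) := by
  ext k
  simp only [mergeLabels, mem_image, mem_univ, true_and, mem_erase]
  constructor
  · rintro ⟨i, rfl⟩
    split_ifs with hi
    · exact ⟨hpq, p, rfl⟩
    · exact ⟨hi, i, rfl⟩
  · rintro ⟨hk, i, rfl⟩
    exact ⟨i, if_neg hk⟩

lemma card_image_mergeLabels [Fintype ι] {c : ι → κ} {p q : ι} (hpq : c p ≠ c q) :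
    #(univ.image (mergeLabels c (c p) (c q))) + 1 = #(univ.image c) := by
  rw [image_mergeLabels hpq]
  exact card_erase_add_one (mem_image_of_mem c (mem_univ q))

lemma dist_le_of_mergeLabels_eq {x : ι → X} {c : ι → κ} {a b : ℝ} {p q i j : ι}
    (hc : ∀ i j, c i = c j → dist (x i) (x j) ≤ a) (hpq : dist (x p) (x q) ≤ b)
    (hij : mergeLabels c (c p) (c q) i = mergeLabels c (c p) (c q) j) :
    dist (x i) (x j) ≤ 2 * a + b := by
  have ha : 0 ≤ a := (dist_self (x p)).symm.le.trans (hc p p rfl)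
  have hb : 0 ≤ b := dist_nonneg.trans hpq
  have across : ∀ u v, c u = c q → c v = c p → dist (x u) (x v) ≤ 2 * a + b := by
    intro u v hu hv
    calc dist (x u) (x v) ≤ dist (x u) (x q) + dist (x q) (x p) + dist (x p) (x v) :=
          dist_triangle4 _ _ _ _
      _ ≤ a + b + a := by
          gcongr
          · exact hc u q hu
          · exact dist_comm (x q) (x p) ▸ hpq
          · exact hc p v hv.symm
      _ = 2 * a + b := by ring
  unfold mergeLabels at hij
  split_ifs at hij with hi hj hj
  · linarith [hc i j (hi.trans hj.symm)]
  · exact across i j hi hij.symm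
  · exact dist_comm (x i) (x j) ▸ across j i hj hij
  · linarith [hc i j hij]

theorem exists_separated_of_labelling [Fintype ι] (x : ι → X) {α β : ℕ → ℝ}
    (hstep : ∀ l, l + 1 < Fintype.card ι → 2 * α l + β (l + 1) ≤ α (l + 1))
    (l : ℕ) (c : ι → κ) (hl : l + #(univ.image c) ≤ Fintype.card ι)
    (hc : ∀ i j, c i = c j → dist (x i) (x j) ≤ α l) :
    ∃ l, ∃ c : ι → κ, l + #(univ.image c) ≤ Fintype.card ι ∧
      (∀ i j, c i = c j → dist (x i) (x j) ≤ α l) ∧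
      (∀ i j, c i ≠ c j → β (l + 1) < dist (x i) (x j)) := by
  induction hk : #(univ.image c) using Nat.strong_induction_on generalizing l c with
  | _ k ih =>
  by_cases hsep : ∀ i j, c i ≠ c j → β (l + 1) < dist (x i) (x j)
  · exact ⟨l, c, hk ▸ hl, hc, hsep⟩
  push Not at hsep
  obtain ⟨p, q, hpq, hclose⟩ := hsep
  have hcard := card_image_mergeLabels hpq
  have htwo : 1 < k := hk ▸ one_lt_card.2
    ⟨_, mem_image_of_mem c (mem_univ p), _, mem_image_of_mem c (mem_univ q), hpq⟩
  exact ih _ (by omega) (l + 1) (mergeLabels c (c p) (c q)) (by omega)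
    (fun i j hij => (dist_le_of_mergeLabels_eq hc hclose hij).trans (hstep l (by omega))) rfl

theorem exists_finpartition_ker [Fintype ι] [DecidableEq ι] {c : ι → κ}
    (hc : ∃ i j, c i ≠ c j) :
    ∃ Q : Finpartition (univ : Finset ι), 2 ≤ #Q.parts ∧
      (∀ I ∈ Q.parts, ∀ i ∈ I, ∀ j ∈ I, c i = c j) ∧
      (∀ I ∈ Q.parts, ∀ I' ∈ Q.parts, I ≠ I' → ∀ i ∈ I, ∀ j ∈ I', c i ≠ c j) := by
  let _ : DecidableRel (Setoid.ker c).r := fun a b => inferInstanceAs (Decidable (c a = c b))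
  let Q := Finpartition.ofSetoid (Setoid.ker c)
  have mem_part : ∀ {i j}, j ∈ Q.part i ↔ c i = c j := Finpartition.mem_part_ofSetoid_iff_rel
  have same_label : ∀ I ∈ Q.parts, ∀ i ∈ I, ∀ j ∈ I, c i = c j := fun I hI i hi j hj =>
    mem_part.1 (Q.part_eq_of_mem hI hi ▸ hj)
  refine ⟨Q, ?_, same_label, fun I hI I' hI' hne i hi j hj hij => hne ?_⟩
  · obtain ⟨i, j, hij⟩ := hc
    exact one_lt_card.2 ⟨Q.part i, Q.part_mem.2 (mem_univ i), Q.part j,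
      Q.part_mem.2 (mem_univ j), fun h => hij (mem_part.1 (h ▸ Q.mem_part (mem_univ j)))⟩
  · rw [← Q.part_eq_of_mem hI hi, ← Q.part_eq_of_mem hI' hj]
    exact ((Q.mem_part_iff_part_eq_part (mem_univ j) (mem_univ i)).1 (mem_part.2 hij)).symm

end Labelling

section Scales

variable {h : ℕ} {α β : ℕ → ℝ}

theorem alpha_nonneg (hα0 : α 0 = 0) (hαβ : ∀ l, 1 ≤ l → l ≤ h → α l = 3 * β l)
    (hchain : ∀ l, l ≤ h → α l < β (l + 1)) : ∀ l ≤ h, 0 ≤ α l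
  | 0, _ => hα0.ge
  | l + 1, hl => by
    have := alpha_nonneg hα0 hαβ hchain l (by omega)
    have := hchain l (by omega)
    rw [hαβ (l + 1) (by omega) hl]
    linarith

theorem alpha_lt_beta_top (hα0 : α 0 = 0) (hαβ : ∀ l, 1 ≤ l → l ≤ h → α l = 3 * β l)
    (hchain : ∀ l, l ≤ h → α l < β (l + 1)) {l : ℕ} (hl : l ≤ h) : α l < β (h + 1) := by
  induction hl using Nat.decreasingInduction with
  | self => exact hchain h le_rfl
  | of_succ k hk ih =>
    have := alpha_nonneg hα0 hαβ hchain k hk.le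
    have := hchain k hk.le
    rw [hαβ (k + 1) (by omega) hk] at ih
    linarith

theorem two_mul_alpha_add_beta_le (hαβ : ∀ l, 1 ≤ l → l ≤ h → α l = 3 * β l)
    (hchain : ∀ l, l ≤ h → α l < β (l + 1)) {l : ℕ} (hl : l + 1 ≤ h) :
    2 * α l + β (l + 1) ≤ α (l + 1) := by
  rw [hαβ (l + 1) (by omega) hl]
  linarith [hchain l (by omega)]

end Scales

end Clustering

open Clustering

theorem covering_lemma_general
    {X : Type*} [MetricSpace X] (h : ℕ)
    (α β : ℕ → ℝ)
    (hα0 : α 0 = 0)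
    (hαβ : ∀ l, 1 ≤ l → l ≤ h → α l = 3 * β l)
    (hchain : ∀ l, l ≤ h → α l < β (l + 1))
    (x : Fin h → X) :
    (∀ i j, dist (x i) (x j) ≤ β (h + 1)) ∨
    ∃ l ≤ h, ∃ Q : Finpartition (Finset.univ : Finset (Fin h)),
      2 ≤ Q.parts.card ∧
      (∀ I ∈ Q.parts, ∀ i ∈ I, ∀ j ∈ I, dist (x i) (x j) ≤ α l) ∧
      (∀ I ∈ Q.parts, ∀ I' ∈ Q.parts, I ≠ I' →
        ∀ i ∈ I, ∀ j ∈ I', β (l + 1) < dist (x i) (x j)) := by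
  have hstep (l : ℕ) (hl : l + 1 < Fintype.card (Fin h)) :=
    two_mul_alpha_add_beta_le hαβ hchain (by simpa using hl.le)
  obtain ⟨l, c, hl, hdiam, hsep⟩ := exists_separated_of_labelling x hstep 0 id (by simp)
    (fun i j hij => by simp [show i = j from hij, hα0])
  have hlh : l ≤ h := by simpa using (Nat.le_add_right l _).trans hl
  by_cases hconst : ∀ i j, c i = c j
  · exact Or.inl fun i j =>
      (hdiam i j (hconst i j)).trans (alpha_lt_beta_top hα0 hαβ hchain hlh).le
  push Not at hconst
  obtain ⟨Q, hQ, hsame, hdiff⟩ := exists_finpartition_ker hconst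
  exact Or.inr ⟨l, hlh, Q, hQ, fun I hI i hi j hj => hdiam i j (hsame I hI i hi j hj),
    fun I hI I' hI' hne i hi j hj => hsep i j (hdiff I hI I' hI' hne i hi j hj)⟩

/-- Björklund–Gorodnik covering lemma: every configuration `x ∈ X^h` is either entirely
`β_{h+1}`-clustered, or belongs to some `Δ_Q(α_l, β_{l+1})` for a partition `Q` of
`{1,…,h}` with at least two blocks. -/
theorem covering_lemma
    {X : Type*} [MetricSpace X] (h : ℕ) (hh : 1 ≤ h)
    (α β : ℕ → ℝ)
    (hα0 : α 0 = 0)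
    (hβ1 : 0 < β 1)
    (hαβ : ∀ l, 1 ≤ l → l ≤ h → α l = 3 * β l)
    (hchain : ∀ l, l ≤ h → α l < β (l + 1))
    (x : Fin h → X) :
    (∀ i j, dist (x i) (x j) ≤ β (h + 1)) ∨
    ∃ l ≤ h, ∃ Q : Finpartition (Finset.univ : Finset (Fin h)),
      2 ≤ Q.parts.card ∧
      (∀ I ∈ Q.parts, ∀ i ∈ I, ∀ j ∈ I, dist (x i) (x j) ≤ α l) ∧
      (∀ I ∈ Q.parts, ∀ I' ∈ Q.parts, I ≠ I' →
        ∀ i ∈ I, ∀ j ∈ I', β (l + 1) < dist (x i) (x j)) :=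
  covering_lemma_general h α β hα0 hαβ hchain x
end
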